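/- arXiv:2302.10691 — 3 statements merged into one kernel-verified Lean document; each statement's English description precedes it below -/
import Mathlib

section
/- Let Z ∈ ℂ^{m×m} be block diagonal with Jordan blocks J_j of sizes (k_j+1) for distinct eigenvalues z_j, and let w be the vector whose block-j component is β_j · e_{k_j+1} (last standard basis vector of the block). Then for any polynomials p, q, the Euclidean inner product of p(Z)w and q(Z)w equals ∑_j |β_j|² ∑_{r=0}^{k_j} |∏_{i=1}^r α_i^{(j)} / r!|² · conj(q^{(r)}(z_j)) · p^{(r)}(z_j). -/
open Polynomial Matrix

/-!
Multiplication by a Jordan block `J` with eigenvalue `z` sends the column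
`(w_r p⁽ʳ⁾(z))_r`, `w_r = α₁⋯α_r / r!`, of `p` to that of `X * p`: this is the Leibniz rule
`(p X)⁽ʳ⁾ = p⁽ʳ⁾ X + r p⁽ʳ⁻¹⁾` together with `r w_r = α_r w_{r-1}`. By induction on `p`,
`p(J) e_last` is this column. Polynomials in a block diagonal matrix act blockwise, so
`p(Z) w` is the concatenation of the columns `β_j (w_r p⁽ʳ⁾(z_j))_r`, and the inner product
splits into the stated sum.
-/

/-- The Jordan block of size `(k+1)×(k+1)` with diagonal entries `z` and superdiagonal
entries `α_k, …, α_1` from top to bottom, i.e. `J_{i,i+1} = α_{k-i}` (0-based `i`). -/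
def jordanBlock (k : ℕ) (z : ℂ) (α : ℕ → ℂ) : Matrix (Fin (k + 1)) (Fin (k + 1)) ℂ :=
  fun i j =>
    if (i : ℕ) = (j : ℕ) then z
    else if (j : ℕ) = (i : ℕ) + 1 then α (k - (i : ℕ)) else 0

namespace Matrix

variable {o : Type*} {m' n' : o → Type*} [Fintype o] [DecidableEq o]

theorem blockDiagonal'_mulVec_apply {α : Type*} [NonUnitalNonAssocSemiring α]
    [∀ i, Fintype (n' i)] (M : ∀ i, Matrix (m' i) (n' i) α) (v : (Σ i, n' i) → α)
    (x : Σ i, m' i) :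
    (blockDiagonal' M *ᵥ v) x = (M x.1 *ᵥ fun j => v ⟨x.1, j⟩) x.2 := by
  obtain ⟨i, a⟩ := x
  rw [mulVec, dotProduct, ← Finset.univ_sigma_univ, Finset.sum_sigma,
    Fintype.sum_eq_single i fun i' hi' => Finset.sum_eq_zero fun b _ => by
      rw [blockDiagonal'_apply_ne _ _ _ hi'.symm, zero_mul]]
  simp only [blockDiagonal'_apply_eq, mulVec, dotProduct]

variable (m') (R : Type*) [CommSemiring R] [∀ i, Fintype (m' i)] [∀ i, DecidableEq (m' i)]

def blockDiagonal'AlgHom : (∀ i, Matrix (m' i) (m' i) R) →ₐ[R] Matrix (Σ i, m' i) (Σ i, m' i) R :=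
  { blockDiagonal'RingHom m' R with
    commutes' := fun r => by simp [Algebra.algebraMap_eq_smul_one] }

variable {m' R}

theorem aeval_blockDiagonal' (M : ∀ i, Matrix (m' i) (m' i) R) (p : R[X]) :
    aeval (blockDiagonal' M) p = blockDiagonal' fun i => aeval (M i) p := by
  rw [← aeval_pi_apply]
  exact aeval_algHom_apply (blockDiagonal'AlgHom m' R) M p

end Matrix

noncomputable def jordanWeight (α : ℕ → ℂ) (r : ℕ) : ℂ :=
  (∏ s ∈ Finset.Icc 1 r, α s) / r.factorial

theorem jordanWeight_zero (α : ℕ → ℂ) : jordanWeight α 0 = 1 := by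
  simp [jordanWeight]

theorem jordanWeight_succ_mul (α : ℕ → ℂ) (r : ℕ) :
    jordanWeight α (r + 1) * (r + 1 : ℕ) = α (r + 1) * jordanWeight α r := by
  simp only [jordanWeight, Finset.prod_Icc_succ_top (Nat.le_add_left 1 r), Nat.factorial_succ,
    Nat.cast_mul]
  field_simp

noncomputable def jordanColumn (k : ℕ) (z : ℂ) (α : ℕ → ℂ) (p : ℂ[X]) : Fin (k + 1) → ℂ :=
  fun i => jordanWeight α i.rev * (derivative^[i.rev] p).eval z

theorem jordanBlock_mulVec_apply (k : ℕ) (z : ℂ) (α : ℕ → ℂ) (v : Fin (k + 1) → ℂ)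
    (i : Fin (k + 1)) :
    (jordanBlock k z α *ᵥ v) i =
      z * v i + if h : (i : ℕ) < k then α (k - i) * v ⟨i + 1, by omega⟩ else 0 := by
  have hsplit (j : Fin (k + 1)) : jordanBlock k z α i j * v j =
      (if j = i then z * v j else 0) + (if (j : ℕ) = i + 1 then α (k - i) * v j else 0) := by
    by_cases hji : j = i
    · simp [jordanBlock, hji]
    · have : (i : ℕ) ≠ j := fun h => hji (Fin.ext h.symm)
      simp [jordanBlock, hji, this]
  rw [mulVec, dotProduct, Fintype.sum_congr _ _ hsplit, Finset.sum_add_distrib,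
    Finset.sum_ite_eq', if_pos (Finset.mem_univ _)]
  congr 1
  split_ifs with h
  · rw [Fintype.sum_eq_single ⟨i + 1, by omega⟩ fun j hj => if_neg fun h' => hj (Fin.ext h')]
    simp
  · exact Finset.sum_eq_zero fun j _ => if_neg (by omega)

theorem jordanBlock_mulVec_jordanColumn (k : ℕ) (z : ℂ) (α : ℕ → ℂ) (p : ℂ[X]) :
    jordanBlock k z α *ᵥ jordanColumn k z α p = jordanColumn k z α (X * p) := by
  ext i
  rw [jordanBlock_mulVec_apply, mul_comm X p]
  simp only [jordanColumn, Fin.val_rev, iterate_derivative_mul_X, eval_add, eval_mul, eval_X,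
    nsmul_eq_mul, eval_natCast]
  split_ifs with h
  · obtain ⟨r, hr⟩ : ∃ r, k + 1 - (i + 1) = r + 1 := ⟨k - i - 1, by omega⟩
    have hr' : k + 1 - (i + 1 + 1) = r := by omega
    rw [hr, hr', add_tsub_cancel_right, show k - (i : ℕ) = r + 1 by omega]
    linear_combination -(derivative^[r] p).eval z * jordanWeight_succ_mul α r
  · simp [show k + 1 - (i + 1) = 0 by omega, jordanWeight_zero, mul_comm]

theorem aeval_jordanBlock_mulVec_single_last (k : ℕ) (z : ℂ) (α : ℕ → ℂ) (p : ℂ[X]) :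
    aeval (jordanBlock k z α) p *ᵥ Pi.single (Fin.last k) 1 = jordanColumn k z α p := by
  induction p using Polynomial.induction_on with
  | C a =>
    ext i
    rw [aeval_C, Algebra.algebraMap_eq_smul_one, smul_mulVec, one_mulVec]
    rcases eq_or_ne i (Fin.last k) with rfl | hi
    · simp [jordanColumn, jordanWeight_zero]
    · have : (i : ℕ) < k := Fin.val_lt_last hi
      simp [jordanColumn, hi, iterate_derivative_C (by omega : 0 < k - (i : ℕ))]
  | add p q hp hq =>
    rw [map_add, add_mulVec, hp, hq]
    ext i
    simp [jordanColumn, mul_add]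
  | monomial n a ih =>
    rw [pow_succ', mul_left_comm, _root_.map_mul, aeval_X, ← mulVec_mulVec, ih,
      jordanBlock_mulVec_jordanColumn]

theorem star_jordanColumn_dotProduct (k : ℕ) (z : ℂ) (α : ℕ → ℂ) (p q : ℂ[X]) :
    star (jordanColumn k z α q) ⬝ᵥ jordanColumn k z α p =
      ∑ r ∈ Finset.range (k + 1), (‖jordanWeight α r‖ : ℂ) ^ 2 *
        starRingEnd ℂ ((derivative^[r] q).eval z) * (derivative^[r] p).eval z := by
  rw [← Fin.sum_univ_eq_sum_range, dotProduct]
  refine Fintype.sum_equiv Fin.revPerm _ _ fun i => ?_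
  simp only [Pi.star_apply, jordanColumn, Fin.revPerm_apply, Complex.star_def, map_mul,
    ← Complex.conj_mul' (jordanWeight α _)]
  ring

theorem stmt_3_general (n : ℕ) (k : Fin n → ℕ) (z : Fin n → ℂ) (α : Fin n → ℕ → ℂ)
    (β : Fin n → ℂ)
    (Z : Matrix ((j : Fin n) × Fin (k j + 1)) ((j : Fin n) × Fin (k j + 1)) ℂ)
    (hZ : Z = Matrix.blockDiagonal' fun j => jordanBlock (k j) (z j) (α j))
    (w : ((j : Fin n) × Fin (k j + 1)) → ℂ)
    (hw : w = fun x => if (x.2 : ℕ) = k x.1 then β x.1 else 0)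
    (p q : Polynomial ℂ) :
    star ((Polynomial.aeval Z q) *ᵥ w) ⬝ᵥ ((Polynomial.aeval Z p) *ᵥ w) =
      ∑ j : Fin n, (‖β j‖ : ℂ) ^ 2 *
        ∑ r ∈ Finset.range (k j + 1),
          (‖(∏ i ∈ Finset.Icc 1 r, α j i) / (r.factorial : ℂ)‖ : ℂ) ^ 2 *
            (starRingEnd ℂ) ((Polynomial.derivative^[r] q).eval (z j)) *
              ((Polynomial.derivative^[r] p).eval (z j)) := by
  have hw_block (j : Fin n) : (fun i => w ⟨j, i⟩) = β j • Pi.single (Fin.last (k j)) 1 := by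
    ext i
    simp [hw, Pi.single_apply, Fin.ext_iff]
  have hcol (s : ℂ[X]) (j : Fin n) (i : Fin (k j + 1)) :
      (aeval Z s *ᵥ w) ⟨j, i⟩ = β j * jordanColumn (k j) (z j) (α j) s i := by
    rw [hZ, aeval_blockDiagonal', blockDiagonal'_mulVec_apply, hw_block, mulVec_smul,
      aeval_jordanBlock_mulVec_single_last, Pi.smul_apply, smul_eq_mul]
  rw [dotProduct, ← Finset.univ_sigma_univ, Finset.sum_sigma]
  refine Finset.sum_congr rfl fun j _ => ?_
  simp only [Pi.star_apply, hcol, star_mul', mul_mul_mul_comm, ← Finset.mul_sum]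
  rw [Complex.star_def, Complex.conj_mul']
  exact congrArg _ (star_jordanColumn_dotProduct _ _ _ p q)

theorem stmt_3 (n : ℕ) (k : Fin n → ℕ) (z : Fin n → ℂ) (α : Fin n → ℕ → ℂ)
    (β : Fin n → ℂ) (hz : Function.Injective z)
    (Z : Matrix ((j : Fin n) × Fin (k j + 1)) ((j : Fin n) × Fin (k j + 1)) ℂ)
    (hZ : Z = Matrix.blockDiagonal' fun j => jordanBlock (k j) (z j) (α j))
    (w : ((j : Fin n) × Fin (k j + 1)) → ℂ)
    (hw : w = fun x => if (x.2 : ℕ) = k x.1 then β x.1 else 0)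
    (p q : Polynomial ℂ) :
    star ((Polynomial.aeval Z q) *ᵥ w) ⬝ᵥ ((Polynomial.aeval Z p) *ᵥ w) =
      ∑ j : Fin n, (‖β j‖ : ℂ) ^ 2 *
        ∑ r ∈ Finset.range (k j + 1),
          (‖(∏ i ∈ Finset.Icc 1 r, α j i) / (r.factorial : ℂ)‖ : ℂ) ^ 2 *
            (starRingEnd ℂ) ((Polynomial.derivative^[r] q).eval (z j)) *
              ((Polynomial.derivative^[r] p).eval (z j)) :=
  stmt_3_general n k z α β Z hZ w hw p q
end

section
/- With Z and w as above (distinct eigenvalues, nonzero weights and superdiagonals), a polynomial p satisfies p(Z)w = 0 if and only if p is divisible by ∏_{j=1}^n (X − z_j)^{k_j+1}; in particular the minimal degree monic polynomial annihilating w under Z is ∏_j (X − z_j)^{k_j+1} of degree m. -/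
open Polynomial Matrix

-- helper: sum against indicator
lemma sum_indicator {m : ℕ} (j₀ : Fin m) (f : Fin m → ℂ) (c : ℂ) :
    ∑ j : Fin m, f j * (if (j : ℕ) = (j₀ : ℕ) then c else 0) = f j₀ * c := by
  simp only [Fin.val_eq_val, mul_ite, mul_zero]
  simp [Finset.sum_ite_eq']

lemma sum_mulVec' {ι m n : Type*} [Fintype n] (s : Finset ι) (M : ι → Matrix m n ℂ)
    (v : n → ℂ) : (∑ i ∈ s, M i) *ᵥ v = ∑ i ∈ s, (M i *ᵥ v) := by
  ext x
  simp only [Matrix.mulVec, dotProduct, Matrix.sum_apply, Finset.sum_mul]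
  rw [Finset.sum_comm]
  simp [Matrix.mulVec, dotProduct, Finset.sum_apply]

section Block

variable (k : ℕ) (zz : ℂ) (α : ℕ → ℂ) (b : ℂ)

lemma Nmat_apply (i j : Fin (k + 1)) :
    (jordanBlock k zz α - zz • 1) i j =
      if (j : ℕ) = (i : ℕ) + 1 then α (k - (i : ℕ)) else 0 := by
  rcases eq_or_ne i j with rfl | h
  · simp [jordanBlock, Matrix.one_apply, Matrix.sub_apply, smul_eq_mul]
  · have h' : (i : ℕ) ≠ (j : ℕ) := fun hh => h (Fin.ext hh)
    simp [jordanBlock, Matrix.one_apply, Matrix.sub_apply, h, h']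

lemma Npow_mulVec :
    ∀ r ≤ k, ((jordanBlock k zz α - zz • 1) ^ r) *ᵥ
        (fun i : Fin (k + 1) => if (i : ℕ) = k then b else 0) =
      fun i : Fin (k + 1) => if (i : ℕ) = k - r then b * ∏ s ∈ Finset.range r, α (s + 1) else 0 := by
  intro r
  induction r with
  | zero => intro _; funext i; simp [Matrix.one_mulVec]
  | succ r ih =>
    intro hr
    have hr' : r ≤ k := Nat.le_of_succ_le hr
    rw [pow_succ', ← Matrix.mulVec_mulVec, ih hr']
    funext i
    have hik : (i : ℕ) < k + 1 := i.isLt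
    set j₀ : Fin (k + 1) := ⟨k - r, by omega⟩ with hj₀
    show ∑ j : Fin (k + 1), (jordanBlock k zz α - zz • 1) i j *
        (if (j : ℕ) = (j₀ : ℕ) then b * ∏ s ∈ Finset.range r, α (s + 1) else 0) = _
    rw [sum_indicator j₀ (fun j => (jordanBlock k zz α - zz • 1) i j), Nmat_apply]
    by_cases hi : (i : ℕ) = k - (r + 1)
    · rw [if_pos hi]
      have h1 : (j₀ : ℕ) = (i : ℕ) + 1 := by simp only [hj₀]; omega
      have h2 : k - (i : ℕ) = r + 1 := by omega
      rw [if_pos h1, h2, Finset.prod_range_succ]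
      ring
    · rw [if_neg hi]
      have h1 : ¬((j₀ : ℕ) = (i : ℕ) + 1) := by simp only [hj₀]; omega
      rw [if_neg h1, zero_mul]

lemma Npow_mulVec_zero :
    ∀ r, k < r → ((jordanBlock k zz α - zz • 1) ^ r) *ᵥ
        (fun i : Fin (k + 1) => if (i : ℕ) = k then b else 0) = 0 := by
  have hbase : ((jordanBlock k zz α - zz • 1) ^ (k + 1)) *ᵥ
      (fun i : Fin (k + 1) => if (i : ℕ) = k then b else 0) = 0 := by
    rw [pow_succ', ← Matrix.mulVec_mulVec, Npow_mulVec k zz α b k le_rfl]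
    funext i
    have h0 : (0 : ℕ) < k + 1 := Nat.succ_pos k
    set j₀ : Fin (k + 1) := ⟨k - k, by omega⟩ with hj₀
    show ∑ j : Fin (k + 1), (jordanBlock k zz α - zz • 1) i j *
        (if (j : ℕ) = (j₀ : ℕ) then b * ∏ s ∈ Finset.range k, α (s + 1) else 0) = _
    rw [sum_indicator j₀ (fun j => (jordanBlock k zz α - zz • 1) i j), Nmat_apply]
    have h1 : ¬((j₀ : ℕ) = (i : ℕ) + 1) := by simp only [hj₀]; omega
    rw [if_neg h1, zero_mul]
    rfl
  intro r hr
  have : r = (r - (k + 1)) + (k + 1) := by omega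
  rw [this, pow_add, ← Matrix.mulVec_mulVec, hbase, Matrix.mulVec_zero]

lemma block_iff (hα : ∀ i, 1 ≤ i → i ≤ k → α i ≠ 0) (hb : b ≠ 0) (p : Polynomial ℂ) :
    (Polynomial.aeval (jordanBlock k zz α) p) *ᵥ
        (fun i : Fin (k + 1) => if (i : ℕ) = k then b else 0) = 0 ↔
      (X - C zz) ^ (k + 1) ∣ p := by
  set J := jordanBlock k zz α with hJdef
  set N := J - zz • 1 with hNdef
  set v : Fin (k + 1) → ℂ := fun i => if (i : ℕ) = k then b else 0 with hvdef
  have hJ : Polynomial.aeval J p =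
      ∑ i ∈ (taylor zz p).support, (taylor zz p).coeff i • N ^ i := by
    conv_lhs => rw [← sum_taylor_eq p zz]
    rw [Polynomial.sum_def, map_sum]
    refine Finset.sum_congr rfl fun i _ => ?_
    simp only [_root_.map_mul, map_pow, _root_.map_sub, aeval_X, aeval_C,
      Algebra.algebraMap_eq_smul_one]
    rw [smul_mul_assoc, one_mul]
  have hv : (Polynomial.aeval J p) *ᵥ v =
      ∑ i ∈ (taylor zz p).support, (taylor zz p).coeff i • (N ^ i *ᵥ v) := by
    rw [hJ, sum_mulVec']
    exact Finset.sum_congr rfl fun i _ => Matrix.smul_mulVec _ _ _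
  constructor
  · intro h0
    have key : ∀ r < k + 1, (taylor zz p).coeff r = 0 := by
      intro r hr
      have hrk : r ≤ k := by omega
      have hx := congrFun (hv.symm.trans h0) ⟨k - r, by omega⟩
      rw [Finset.sum_apply] at hx
      rw [Finset.sum_eq_single r (fun i _ hir => ?_) (fun hmem => ?_)] at hx
      · rw [Npow_mulVec k zz α b r hrk] at hx
        simp only [Pi.smul_apply, smul_eq_mul, if_pos rfl] at hx
        have hγ : b * ∏ s ∈ Finset.range r, α (s + 1) ≠ 0 := by
          refine mul_ne_zero hb (Finset.prod_ne_zero_iff.mpr fun s hs => ?_)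
          exact hα (s + 1) (by omega) (by simp at hs; omega)
        exact (mul_eq_zero.mp hx).resolve_right hγ
      · by_cases hik : i ≤ k
        · rw [Pi.smul_apply, Npow_mulVec k zz α b i hik]
          have : ¬(k - r = k - i) := by omega
          simp [this]
        · rw [Pi.smul_apply, Npow_mulVec_zero k zz α b i (by omega)]
          simp
      · rw [Polynomial.notMem_support_iff.mp hmem]
        simp
    have hX : X ^ (k + 1) ∣ taylor zz p := Polynomial.X_pow_dvd_iff.mpr key
    obtain ⟨q, hq⟩ := hX
    refine ⟨taylor (-zz) q, ?_⟩
    have h1 : taylor (-zz) (taylor zz p) = p := by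
      rw [taylor_taylor, neg_add_cancel, taylor_zero]
    have h2 : taylor (-zz) (X ^ (k + 1) * q) = (X - C zz) ^ (k + 1) * taylor (-zz) q := by
      rw [taylor_mul]
      congr 1
      rw [taylor_apply, pow_comp, X_comp, map_neg, ← sub_eq_add_neg]
    rw [← h1, hq, h2]
  · rintro ⟨q, hq⟩
    rw [hv]
    have hcoeff : ∀ r < k + 1, (taylor zz p).coeff r = 0 := by
      apply Polynomial.X_pow_dvd_iff.mp
      have h3 : taylor zz ((X - C zz) ^ (k + 1) * q) = X ^ (k + 1) * taylor zz q := by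
        rw [taylor_mul]
        congr 1
        rw [taylor_apply, pow_comp, sub_comp, X_comp, C_comp, add_sub_cancel_right]
      rw [hq, h3]
      exact dvd_mul_right _ _
    refine Finset.sum_eq_zero fun i hi => ?_
    have hik : k < i := by
      by_contra hle
      push_neg at hle
      exact Polynomial.mem_support_iff.mp hi (hcoeff i (by omega))
    rw [Npow_mulVec_zero k zz α b i hik, smul_zero]

end Block

theorem stmt_6 (n : ℕ) (k : Fin n → ℕ) (z : Fin n → ℂ) (α : Fin n → ℕ → ℂ)
    (β : Fin n → ℂ) (hz : Function.Injective z)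
    (hα : ∀ j : Fin n, ∀ i : ℕ, 1 ≤ i → i ≤ k j → α j i ≠ 0)
    (hβ : ∀ j : Fin n, β j ≠ 0)
    (Z : Matrix ((j : Fin n) × Fin (k j + 1)) ((j : Fin n) × Fin (k j + 1)) ℂ)
    (hZ : Z = Matrix.blockDiagonal' fun j => jordanBlock (k j) (z j) (α j))
    (w : ((j : Fin n) × Fin (k j + 1)) → ℂ)
    (hw : w = fun x => if (x.2 : ℕ) = k x.1 then β x.1 else 0) :
    (∀ p : Polynomial ℂ,
        (Polynomial.aeval Z p) *ᵥ w = 0 ↔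
          (∏ j : Fin n, (Polynomial.X - Polynomial.C (z j)) ^ (k j + 1)) ∣ p) ∧
      (∏ j : Fin n, (Polynomial.X - Polynomial.C (z j)) ^ (k j + 1)).Monic ∧
      (∏ j : Fin n, (Polynomial.X - Polynomial.C (z j)) ^ (k j + 1)).natDegree =
        ∑ j : Fin n, (k j + 1) := by
  subst hZ hw
  set Jb : ∀ j : Fin n, Matrix (Fin (k j + 1)) (Fin (k j + 1)) ℂ :=
    fun j => jordanBlock (k j) (z j) (α j) with hJb
  refine ⟨fun p => ?_, ?_, ?_⟩
  · have haev : Polynomial.aeval (blockDiagonal' Jb) p =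
        blockDiagonal' (fun j => Polynomial.aeval (Jb j) p) := by
      let φ : (∀ j : Fin n, Matrix (Fin (k j + 1)) (Fin (k j + 1)) ℂ) →ₐ[ℂ]
          Matrix ((j : Fin n) × Fin (k j + 1)) ((j : Fin n) × Fin (k j + 1)) ℂ :=
        { Matrix.blockDiagonal'RingHom (fun j => Fin (k j + 1)) ℂ with
          commutes' := fun r => by
            have h1 : (algebraMap ℂ (∀ j : Fin n, Matrix (Fin (k j + 1)) (Fin (k j + 1)) ℂ) r) =
                r • (1 : ∀ j : Fin n, Matrix (Fin (k j + 1)) (Fin (k j + 1)) ℂ) := by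
              funext j
              rw [Pi.algebraMap_apply, Algebra.algebraMap_eq_smul_one]
              rfl
            show blockDiagonal' (algebraMap ℂ _ r) = algebraMap ℂ _ r
            rw [h1, Matrix.blockDiagonal'_smul, Matrix.blockDiagonal'_one,
              Algebra.algebraMap_eq_smul_one] }
      have e1 : Polynomial.aeval (φ Jb) p = φ (Polynomial.aeval Jb p) :=
        Polynomial.aeval_algHom_apply φ Jb p
      have e2 : φ Jb = blockDiagonal' Jb := rfl
      have e3 : φ (Polynomial.aeval Jb p) =
          blockDiagonal' (fun j => Polynomial.aeval (Jb j) p) := by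
        show blockDiagonal' _ = _
        refine congrArg blockDiagonal' (funext fun j => ?_)
        exact (Polynomial.aeval_algHom_apply (Pi.evalAlgHom ℂ (fun j => Matrix (Fin (k j + 1)) (Fin (k j + 1)) ℂ) j) Jb p).symm
      rw [← e2, e1, e3]
    have hmv : ∀ (j : Fin n) (i : Fin (k j + 1)),
        ((blockDiagonal' fun j => Polynomial.aeval (Jb j) p) *ᵥ
          (fun x : (j : Fin n) × Fin (k j + 1) =>
            if (x.2 : ℕ) = k x.1 then β x.1 else 0)) ⟨j, i⟩ =
        ((Polynomial.aeval (Jb j) p) *ᵥ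
          fun i' : Fin (k j + 1) => if (i' : ℕ) = k j then β j else 0) i := by
      intro j i
      show ∑ x : (j' : Fin n) × Fin (k j' + 1), _ = _
      rw [← Finset.univ_sigma_univ, Finset.sum_sigma]
      rw [Finset.sum_eq_single j (fun j' _ hj' => ?_) (fun h => absurd (Finset.mem_univ j) h)]
      · exact Finset.sum_congr rfl fun i' _ => by simp only [Matrix.blockDiagonal'_apply_eq]
      · refine Finset.sum_eq_zero fun i' _ => ?_
        simp only [Matrix.blockDiagonal'_apply_ne _ _ _ (Ne.symm hj'), zero_mul]
    rw [haev]
    have hsplit : ((blockDiagonal' fun j => Polynomial.aeval (Jb j) p) *ᵥ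
        (fun x : (j : Fin n) × Fin (k j + 1) =>
          if (x.2 : ℕ) = k x.1 then β x.1 else 0)) = 0 ↔
        ∀ j, (Polynomial.aeval (Jb j) p) *ᵥ
          (fun i' : Fin (k j + 1) => if (i' : ℕ) = k j then β j else 0) = 0 := by
      constructor
      · intro h j
        funext i
        rw [← hmv j i, h]
        rfl
      · intro h
        funext x
        obtain ⟨j, i⟩ := x
        rw [hmv j i, h j]
        rfl
    rw [hsplit]
    constructor
    · intro h
      refine Fintype.prod_dvd_of_coprime ?_
        (fun j => (block_iff _ _ _ _ (hα j) (hβ j) p).mp (h j))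
      intro j j' hjj'
      exact (Polynomial.pairwise_coprime_X_sub_C hz hjj').pow
    · intro h j
      exact (block_iff _ _ _ _ (hα j) (hβ j) p).mpr
        (dvd_trans (Finset.dvd_prod_of_mem (fun j => (X - C (z j)) ^ (k j + 1)) (Finset.mem_univ j)) h)
  · exact monic_prod_of_monic _ _ fun j _ => (monic_X_sub_C _).pow _
  · rw [Polynomial.natDegree_prod _ _ fun j _ => pow_ne_zero _ (Polynomial.X_sub_C_ne_zero (z j))]
    exact Finset.sum_congr rfl fun j _ => by
      rw [Polynomial.natDegree_pow, Polynomial.natDegree_X_sub_C, mul_one]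
end

section
/- For the 2×2 Jordan-block matrix Z = [[c, √N/√M],[0, c]] (M, N > 0) and w = (0, √M), and for real polynomials p, q: ⟨q(Z)w, p(Z)w⟩ = M·p(c)q(c) + N·p'(c)q'(c). -/
open Polynomial Matrix

lemma jordan_pow (c b : ℂ) (n : ℕ) :
    (!![c, b; 0, c]) ^ n = !![c ^ n, b * n * c ^ (n - 1); 0, c ^ n] := by
  induction n with
  | zero => simp [Matrix.one_fin_two]
  | succ n ih =>
    rw [pow_succ, ih]
    ext i j
    fin_cases i <;> fin_cases j <;>
      simp [Matrix.mul_apply, Fin.sum_univ_two, pow_succ]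
    rcases n with _ | m
    · simp
    · push_cast
      ring

lemma jordan_aeval (c : ℝ) (b : ℂ) (p : Polynomial ℝ) :
    Polynomial.aeval (!![(c : ℂ), b; 0, (c : ℂ)]) p =
      !![((p.eval c : ℝ) : ℂ), b * (((Polynomial.derivative p).eval c : ℝ) : ℂ);
         0, ((p.eval c : ℝ) : ℂ)] := by
  induction p using Polynomial.induction_on' with
  | add p q hp hq =>
    rw [map_add, hp, hq]
    ext i j
    fin_cases i <;> fin_cases j <;> simp <;> push_cast <;> ring
  | monomial n a =>
    rw [Polynomial.aeval_monomial, jordan_pow]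
    ext i j
    fin_cases i <;> fin_cases j <;>
      simp [Polynomial.derivative_monomial, Algebra.algebraMap_eq_smul_one,
        Matrix.smul_apply, Matrix.one_apply, Matrix.mul_apply, Fin.sum_univ_two] <;>
      push_cast <;> ring

theorem stmt_17 (M N : ℝ) (hM : 0 < M) (hN : 0 < N) (c : ℝ)
    (Z : Matrix (Fin 2) (Fin 2) ℂ)
    (hZ : Z = !![(c : ℂ), ((Real.sqrt N / Real.sqrt M : ℝ) : ℂ); 0, (c : ℂ)])
    (w : Fin 2 → ℂ) (hw : w = ![0, ((Real.sqrt M : ℝ) : ℂ)])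
    (p q : Polynomial ℝ) :
    star ((Polynomial.aeval Z q) *ᵥ w) ⬝ᵥ ((Polynomial.aeval Z p) *ᵥ w) =
      ((M * p.eval c * q.eval c +
        N * (Polynomial.derivative p).eval c * (Polynomial.derivative q).eval c : ℝ) : ℂ) := by
  subst hZ hw
  rw [jordan_aeval, jordan_aeval]
  have hMs : Real.sqrt M ≠ 0 := by positivity
  simp only [Matrix.mulVec, dotProduct, Fin.sum_univ_two, Matrix.cons_val_zero,
    Matrix.cons_val_one, Matrix.head_cons, Matrix.cons_val', Matrix.head_fin_const,
    Matrix.empty_val', Matrix.cons_val_fin_one, Pi.star_apply, RCLike.star_def,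
    Matrix.of_apply]
  have h1 : (Real.sqrt M : ℂ) ≠ 0 := Complex.ofReal_ne_zero.mpr hMs
  have hNN : (Real.sqrt N : ℂ) * (Real.sqrt N : ℂ) = (N : ℂ) := by
    norm_cast; exact Real.mul_self_sqrt hN.le
  have hMM : (Real.sqrt M : ℂ) * (Real.sqrt M : ℂ) = (M : ℂ) := by
    norm_cast; exact Real.mul_self_sqrt hM.le
  simp only [mul_zero, zero_mul, zero_add, add_zero, _root_.map_mul, map_div₀,
    Complex.conj_ofReal, Complex.ofReal_mul, Complex.ofReal_add, Complex.ofReal_div]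
  field_simp
  linear_combination (↑(eval c (derivative p)) * ↑(eval c (derivative q)) : ℂ) * hNN +
    (↑(eval c p) * ↑(eval c q) : ℂ) * hMM
end
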